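/- With h_n defined by h_10 = λ^{10} − 9λ^8 + 26λ^6 − 30λ^4 + 13λ^2 − 1, h_11 = λ^{11} − 10λ^9 + 34λ^7 − 48λ^5 + 29λ^3 − 6λ, and h_n = λ·h_{n−1} − h_{n−2} for n ≥ 12: h_n evaluated at 2 equals 9(n − 15), for every n ≥ 10. -/
import Mathlib

open Polynomial

/-- Auxiliary sequence: `hAux m` is the characteristic polynomial of `H (m + 10)`. -/
noncomputable def hAux : ℕ → Polynomial ℤ
  | 0 => X ^ 10 - 9 * X ^ 8 + 26 * X ^ 6 - 30 * X ^ 4 + 13 * X ^ 2 - 1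
  | 1 => X ^ 11 - 10 * X ^ 9 + 34 * X ^ 7 - 48 * X ^ 5 + 29 * X ^ 3 - 6 * X
  | (m + 2) => X * hAux (m + 1) - hAux m

/-- `hPoly n`, for `n ≥ 10`, is the characteristic polynomial of the H-shape tree
`H_n = P_{2,2;n-4}^{2,n-7}`. -/
noncomputable def hPoly (n : ℕ) : Polynomial ℤ := hAux (n - 10)

lemma hAux_eval_two : ∀ m : ℕ, (hAux m).eval 2 = 9 * ((m : ℤ) - 5)
  | 0 => by simp [hAux]
  | 1 => by simp [hAux]
  | (m + 2) => by
      have h1 := hAux_eval_two (m + 1)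
      have h0 := hAux_eval_two m
      simp [hAux, h1, h0]
      ring

theorem hPoly_eval_two (n : ℕ) (hn : 10 ≤ n) :
    (hPoly n).eval 2 = 9 * ((n : ℤ) - 15) := by
  rw [hPoly, hAux_eval_two]
  have : ((n - 10 : ℕ) : ℤ) = (n : ℤ) - 10 := by omega
  rw [this]; ring
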